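/- arXiv:1303.1364 — 11 statements merged into one kernel-verified Lean document; each statement's English description precedes it below -/
import Mathlib

section
/- For any element x of a finite group G, the map y·C_G^⊗(x) ↦ y ⊗ x from C_G(x)/C_G^⊗(x) to J_2(G) is a well-defined injective group homomorphism. -/
open scoped commutatorElement

section CentralizerPairing

variable {G T : Type*} [Group G] [Group T] (t : G → G → T) (κ : T →* G) (x : G)

theorem pairing_mem_ker_of_mem_centralizer (hκ : ∀ a b : G, κ (t a b) = ⁅a, b⁆) {y : G}
    (hy : y ∈ Subgroup.centralizer {x}) : t y x ∈ κ.ker := by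
  rw [MonoidHom.mem_ker, hκ, commutatorElement_eq_one_iff_commute]
  exact Subgroup.mem_centralizer_singleton_iff.1 hy

/-- `y ↦ y ⊗ x` on `C_G(x)`, with values in `J₂(G) = ker κ`. -/
def centralizerPairingHom (hκ : ∀ a b : G, κ (t a b) = ⁅a, b⁆)
    (hmul : ∀ a ∈ Subgroup.centralizer {x}, ∀ b ∈ Subgroup.centralizer {x},
      t (a * b) x = t a x * t b x) :
    Subgroup.centralizer {x} →* κ.ker :=
  MonoidHom.mk' (fun y => ⟨t y x, pairing_mem_ker_of_mem_centralizer t κ x hκ y.2⟩)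
    fun a b => Subtype.ext (hmul a a.2 b b.2)

theorem ker_centralizerPairingHom (hκ : ∀ a b : G, κ (t a b) = ⁅a, b⁆)
    (hmul : ∀ a ∈ Subgroup.centralizer {x}, ∀ b ∈ Subgroup.centralizer {x},
      t (a * b) x = t a x * t b x)
    (Cx : Subgroup G) (hCx : ∀ a : G, a ∈ Cx ↔ t a x = 1) :
    (centralizerPairingHom t κ x hκ hmul).ker = Cx.subgroupOf (Subgroup.centralizer {x}) := by
  ext y
  rw [MonoidHom.mem_ker, Subgroup.mem_subgroupOf, hCx, ← Subtype.val_inj]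
  rfl

end CentralizerPairing

theorem exists_injective_hom_centralizer_quotient_to_J2_general
    {G T : Type*} [Group G] [Group T]
    (t : G → G → T) (κ : T →* G)
    (hκ : ∀ a b : G, κ (t a b) = ⁅a, b⁆)
    (hmul : ∀ x : G, ∀ a ∈ Subgroup.centralizer {x}, ∀ b ∈ Subgroup.centralizer {x},
      t (a * b) x = t a x * t b x)
    (x : G) (Cx : Subgroup G)
    (hCx : ∀ a : G, a ∈ Cx ↔ t a x = 1)
    [hnormal : (Cx.subgroupOf (Subgroup.centralizer {x})).Normal] :
    ∃ φ : (Subgroup.centralizer {x} ⧸ Cx.subgroupOf (Subgroup.centralizer {x})) →* κ.ker,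
      Function.Injective φ ∧
      ∀ y : Subgroup.centralizer {x}, (φ (QuotientGroup.mk y) : T) = t (y : G) x := by
  have hker := ker_centralizerPairingHom t κ x hκ (hmul x) Cx hCx
  exact ⟨QuotientGroup.lift _ _ hker.ge,
    (QuotientGroup.injective_lift_iff _ _ _).2 hker.symm, fun _ => rfl⟩

/-- For any element `x` of a finite group `G`, the map
`y·C_G^⊗(x) ↦ y ⊗ x` from `C_G(x)/C_G^⊗(x)` into `J₂(G) = ker κ` is a well-defined
injective group homomorphism. The nonabelian tensor square is modelled by a group `T`
with pairing `t` and commutator homomorphism `κ`; `C_G^⊗(x)` is a normal subgroup of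
`C_G(x)`. -/
theorem exists_injective_hom_centralizer_quotient_to_J2
    {G T : Type*} [Group G] [Finite G] [Group T] [Finite T]
    (t : G → G → T) (κ : T →* G)
    (hκ : ∀ a b : G, κ (t a b) = ⁅a, b⁆)
    (hmul : ∀ x : G, ∀ a ∈ Subgroup.centralizer {x}, ∀ b ∈ Subgroup.centralizer {x},
      t (a * b) x = t a x * t b x)
    (x : G) (Cx : Subgroup G)
    (hCx : ∀ a : G, a ∈ Cx ↔ t a x = 1)
    (hle : Cx ≤ Subgroup.centralizer {x})
    [hnormal : (Cx.subgroupOf (Subgroup.centralizer {x})).Normal] :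
    ∃ φ : (Subgroup.centralizer {x} ⧸ Cx.subgroupOf (Subgroup.centralizer {x})) →* κ.ker,
      Function.Injective φ ∧
      ∀ y : Subgroup.centralizer {x}, (φ (QuotientGroup.mk y) : T) = t (y : G) x :=
  exists_injective_hom_centralizer_quotient_to_J2_general t κ hκ hmul x Cx hCx (hnormal := hnormal)
end

section
/- If x_1, …, x_k(G) is a system of representatives for the conjugacy classes of a finite group G, then the tensor degree satisfies d^⊗(G) = (1/|G|) · Σ_{i=1}^{k(G)} |C_G^⊗(x_i)| / |C_G(x_i)|. -/
/-!
Counting pairs by their second coordinate gives `|G|² d⊗(G) = Σ_x |C_G^⊗(x)|`. The summand is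
a class function, so the sum over `G` collapses to a sum over class representatives weighted
by the class sizes, and by orbit–stabilizer `|x^G| = |G| / |C_G(x)|`.
-/

open Finset

theorem ConjClasses.nat_card_carrier_mul_nat_card_centralizer {G : Type*} [Group G] (g : G) :
    Nat.card (ConjClasses.mk g).carrier * Nat.card (Subgroup.centralizer {g}) = Nat.card G := by
  rw [← ConjAct.orbit_eq_carrier_conjClasses, Nat.card_coe_set_eq,
    ← MulAction.index_stabilizer, ConjAct.stabilizer_eq_centralizer]
  exact Subgroup.index_mul_card _

theorem Nat.card_subtype_prod_eq_sum {α β : Type*} [Finite α] [Fintype β] (P : α → β → Prop) :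
    Nat.card {p : α × β // P p.1 p.2} = ∑ b, Nat.card {a // P a b} := by
  rw [← Nat.card_sigma]
  exact Nat.card_congr
    { toFun := fun p => ⟨p.1.2, p.1.1, p.2⟩
      invFun := fun s => ⟨(s.2.1, s.1), s.2.2⟩ }

theorem sum_eq_sum_conjClasses_card_carrier_nsmul {G M : Type*} [Group G] [Fintype G]
    [Fintype (ConjClasses G)] [AddCommMonoid M] (f : G → M) (hf : ∀ x y, IsConj x y → f x = f y)
    (r : ConjClasses G → G) (hr : ∀ c, ConjClasses.mk (r c) = c) :
    ∑ x, f x = ∑ c, Nat.card c.carrier • f (r c) := by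
  classical
  rw [← sum_fiberwise univ ConjClasses.mk f]
  refine sum_congr rfl fun c _ => ?_
  have hfib : ∀ x ∈ univ.filter (ConjClasses.mk · = c), f x = f (r c) := fun x hx =>
    hf x (r c) (ConjClasses.mk_eq_mk_iff_isConj.mp ((mem_filter.mp hx).2.trans (hr c).symm))
  rw [sum_congr rfl hfib, sum_const, ← Nat.card_eq_finsetCard]
  congr 1
  exact Nat.card_congr <| Equiv.subtypeEquivRight fun x => by
    simp [ConjClasses.mem_carrier_iff_mk_eq]

theorem sum_div_card_centralizer_eq_sum_div_card {G K : Type*} [Group G] [Fintype G]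
    [Fintype (ConjClasses G)] [Field K] [CharZero K] (f : G → K)
    (hf : ∀ x y, IsConj x y → f x = f y) (r : ConjClasses G → G)
    (hr : ∀ c, ConjClasses.mk (r c) = c) :
    ∑ c, f (r c) / Nat.card (Subgroup.centralizer {r c}) = (∑ x, f x) / Nat.card G := by
  rw [sum_eq_sum_conjClasses_card_carrier_nsmul f hf r hr, sum_div]
  refine sum_congr rfl fun c _ => ?_
  have hcard := ConjClasses.nat_card_carrier_mul_nat_card_centralizer (r c)
  rw [hr] at hcard
  have hc : (Nat.card c.carrier : K) ≠ 0 :=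
    Nat.cast_ne_zero.mpr (left_ne_zero_of_mul (hcard ▸ Nat.card_pos.ne'))
  rw [nsmul_eq_mul, ← hcard, Nat.cast_mul, mul_div_mul_left _ _ hc]

theorem nat_card_subtype_eq_of_isConj {G : Type*} [Group G] (R : G → G → Prop)
    (hR : ∀ g a x, R a x ↔ R (g⁻¹ * a * g) (g⁻¹ * x * g)) {x y : G} (hxy : IsConj x y) :
    Nat.card {a // R a x} = Nat.card {a // R a y} := by
  obtain ⟨g, rfl⟩ := isConj_iff.mp hxy
  refine Nat.card_congr (Equiv.subtypeEquiv (MulAut.conj g).toEquiv fun a => ?_)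
  simpa using hR g⁻¹ a x

/-- If `x₁, …, x_{k(G)}` is a system of representatives for the conjugacy classes of a
finite group `G`, then the tensor degree satisfies
`d⊗(G) = (1/|G|) · Σᵢ |C_G^⊗(xᵢ)| / |C_G(xᵢ)|`. The nonabelian tensor square is modelled
by a group `T` and a pairing `t`, with the (true) fact that tensor centralizers of
conjugate elements correspond under conjugation. -/
theorem tensor_degree_eq_sum_over_conjClasses
    {G T : Type*} [Group G] [Fintype G] [DecidableEq G] [Group T]
    (t : G → G → T)
    (hconj : ∀ g a x : G, t a x = 1 ↔ t (g⁻¹ * a * g) (g⁻¹ * x * g) = 1)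
    (r : ConjClasses G → G) (hr : ∀ c : ConjClasses G, ConjClasses.mk (r c) = c) :
    (Nat.card {p : G × G // t p.1 p.2 = 1} : ℝ) / (Fintype.card G : ℝ) ^ 2 =
      (1 / (Fintype.card G : ℝ)) *
        ∑ c : ConjClasses G,
          (Nat.card {a : G // t a (r c) = 1} : ℝ) /
            (Nat.card (Subgroup.centralizer {r c}) : ℝ) := by
  rw [sum_div_card_centralizer_eq_sum_div_card (fun x => (Nat.card {a // t a x = 1} : ℝ))
    (fun x y hxy => congrArg _ (nat_card_subtype_eq_of_isConj _ hconj hxy)) r hr,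
    Nat.card_subtype_prod_eq_sum (fun a x => t a x = 1), Nat.cast_sum,
    Nat.card_eq_fintype_card (α := G)]
  ring
end

section
/- If G is a finite perfect group and G* is a Schur cover of G (so there is an exact sequence 1 → A → G* → G → 1 with A ≅ M(G) contained in Z(G*) ∩ (G*)'), then d^⊗(G) = d(G*). -/
/-!
A pair `(a, b)` in `G*` commutes iff `ξ (t (π a) (π b)) = ⁅a, b⁆` is trivial, i.e. iff
`t (π a) (π b) = 1`. So the commuting pairs of `G*` are exactly the preimage under `π × π` of
the pairs of `G` with trivial tensor. A surjective homomorphism preserves the density of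
preimages, since all its fibres are cosets of the kernel.
-/

open scoped commutatorElement

namespace MonoidHom

variable {H Q : Type*} [Group H] [Group Q]

theorem card_preimage_of_surjective (f : H →* Q) (hf : Function.Surjective f) (S : Set Q) :
    Nat.card (f ⁻¹' S) = Nat.card f.ker * Nat.card S := by
  let e := QuotientGroup.quotientKerEquivOfSurjective f hf
  have hpre : f ⁻¹' S = QuotientGroup.mk ⁻¹' (e ⁻¹' S) := rfl
  rw [hpre, QuotientGroup.card_preimage_mk,
    Nat.card_preimage_of_injective e.injective (by simp [e.surjective.range_eq])]

theorem card_preimage_div_card_of_surjective [Finite H] (f : H →* Q)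
    (hf : Function.Surjective f) (S : Set Q) :
    (Nat.card (f ⁻¹' S) : ℝ) / Nat.card H = Nat.card S / Nat.card Q := by
  have hH : Nat.card H = Nat.card f.ker * Nat.card Q := by
    simpa using f.card_preimage_of_surjective hf Set.univ
  have hker : (Nat.card f.ker : ℝ) ≠ 0 := by exact_mod_cast Nat.card_pos.ne'
  rw [f.card_preimage_of_surjective hf, hH]
  push_cast
  rw [mul_div_mul_left _ _ hker]

end MonoidHom

theorem commute_iff_eq_one_of_mulEquiv_eq_commutatorElement {G Gstar T : Type*} [Group Gstar]
    [Group T] (π : Gstar → G) (t : G → G → T) (ξ : T ≃* Gstar)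
    (hξ : ∀ a b : Gstar, ξ (t (π a) (π b)) = ⁅a, b⁆) (a b : Gstar) :
    Commute a b ↔ t (π a) (π b) = 1 := by
  rw [← commutatorElement_eq_one_iff_commute, ← hξ, MulEquiv.map_eq_one_iff]

theorem tensor_degree_perfect_eq_commutativity_degree_schur_cover_general
    {G Gstar T : Type*} [Group G] [Fintype G] [Group Gstar] [Fintype Gstar] [Group T]
    (π : Gstar →* G) (hπ : Function.Surjective π)
    (t : G → G → T)
    (ξ : T ≃* Gstar)
    (hξ : ∀ g h : G, ∀ g₁ h₁ : Gstar, π g₁ = g → π h₁ = h → ξ (t g h) = ⁅g₁, h₁⁆) :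
    (Nat.card {q : G × G // t q.1 q.2 = 1} : ℝ) / (Fintype.card G : ℝ) ^ 2 =
      (Nat.card {q : Gstar × Gstar // Commute q.1 q.2} : ℝ) /
        (Fintype.card Gstar : ℝ) ^ 2 := by
  have hcomm : {q : Gstar × Gstar | Commute q.1 q.2} =
      π.prodMap π ⁻¹' {p : G × G | t p.1 p.2 = 1} := by
    ext q
    exact commute_iff_eq_one_of_mulEquiv_eq_commutatorElement π t ξ
      (fun a b => hξ _ _ a b rfl rfl) q.1 q.2
  have hdensity := (π.prodMap π).card_preimage_div_card_of_surjective (hπ.prodMap hπ)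
    {p : G × G | t p.1 p.2 = 1}
  rw [← hcomm, Nat.card_prod, Nat.card_prod] at hdensity
  simp only [← Nat.card_eq_fintype_card, sq]
  push_cast at hdensity
  exact hdensity.symm

/-- If `G` is a finite perfect group and `G*` is a Schur cover of `G` (a stem extension:
`1 → A → G* →π G → 1` with `A = ker π ≤ Z(G*) ∩ (G*)'`), then `d⊗(G) = d(G*)`: the tensor
degree of `G` equals the commutativity degree of `G*`. The nonabelian tensor square of the
perfect group `G` is modelled by a group `T` with pairing `t`, together with the
isomorphism `ξ : G ⊗ G ≃ G*` sending `g ⊗ h` to `[g₁, h₁]` for preimages `g₁, h₁`. -/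
theorem tensor_degree_perfect_eq_commutativity_degree_schur_cover
    {G Gstar T : Type*} [Group G] [Fintype G] [Group Gstar] [Fintype Gstar] [Group T]
    (hperfect : commutator G = ⊤)
    (π : Gstar →* G) (hπ : Function.Surjective π)
    (hstem : π.ker ≤ Subgroup.center Gstar ⊓ commutator Gstar)
    (t : G → G → T)
    (ξ : T ≃* Gstar)
    (hξ : ∀ g h : G, ∀ g₁ h₁ : Gstar, π g₁ = g → π h₁ = h → ξ (t g h) = ⁅g₁, h₁⁆) :
    (Nat.card {q : G × G // t q.1 q.2 = 1} : ℝ) / (Fintype.card G : ℝ) ^ 2 =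
      (Nat.card {q : Gstar × Gstar // Commute q.1 q.2} : ℝ) /
        (Fintype.card Gstar : ℝ) ^ 2 :=
  tensor_degree_perfect_eq_commutativity_degree_schur_cover_general π hπ t ξ hξ
end

section
/- If N is a normal subgroup of a finite group G, then d^⊗(G) ≤ d^⊗(G/N); moreover equality holds whenever N ⊆ Z^⊗(G). -/
/-- If `N` is a normal subgroup of a finite group `G`, then `d⊗(G) ≤ d⊗(G/N)`, with
equality whenever `N ⊆ Z⊗(G)`. The tensor squares of `G` and `G/N` are modelled by
groups `T`, `Tq` with pairings `t`, `tq`; tensor centralizers in `G` are subgroups, the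
natural homomorphism `β : G ⊗ G → (G/N) ⊗ (G/N)` satisfies `β(x ⊗ y) = xN ⊗ yN`, and it
is injective when `N ⊆ Z⊗(G)` (Ellis). -/
theorem tensor_degree_le_tensor_degree_quotient
    {G T Tq : Type*} [Group G] [Finite G] [Group T] [Group Tq]
    (N : Subgroup G) [N.Normal]
    (t : G → G → T) (tq : G ⧸ N → G ⧸ N → Tq)
    (C : G → Subgroup G) (hC : ∀ x a : G, a ∈ C x ↔ t a x = 1)
    (β : T →* Tq)
    (hβ : ∀ x y : G, β (t x y) = tq (x : G ⧸ N) (y : G ⧸ N))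
    (hβsurj : Function.Surjective β)
    (hinj : (∀ n ∈ N, ∀ y : G, t n y = 1) → Function.Injective β) :
    (Nat.card {q : G × G // t q.1 q.2 = 1} : ℝ) / (Nat.card G : ℝ) ^ 2 ≤
      (Nat.card {q : (G ⧸ N) × (G ⧸ N) // tq q.1 q.2 = 1} : ℝ) /
        (Nat.card (G ⧸ N) : ℝ) ^ 2 ∧
    ((∀ n ∈ N, ∀ y : G, t n y = 1) →
      (Nat.card {q : G × G // t q.1 q.2 = 1} : ℝ) / (Nat.card G : ℝ) ^ 2 =
        (Nat.card {q : (G ⧸ N) × (G ⧸ N) // tq q.1 q.2 = 1} : ℝ) /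
          (Nat.card (G ⧸ N) : ℝ) ^ 2) := by
  classical
  set s : G ⧸ N → G := Quotient.out with hs_def
  have hsec : ∀ a : G ⧸ N, ((s a : G) : G ⧸ N) = a := fun a => Quotient.out_eq a
  have hmem : ∀ x : G, (s ((x : G ⧸ N)))⁻¹ * x ∈ N := by
    intro x
    rw [← QuotientGroup.eq]
    exact hsec _
  have himg : ∀ x y : G, t x y = 1 → tq (x : G ⧸ N) (y : G ⧸ N) = 1 := by
    intro x y h
    have h2 := hβ x y
    rw [h, map_one] at h2
    exact h2.symm
  -- the key map
  let f : {q : G × G // t q.1 q.2 = 1} →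
      {q : (G ⧸ N) × (G ⧸ N) // tq q.1 q.2 = 1} × (N × N) :=
    fun p => ⟨⟨((p.1.1 : G ⧸ N), (p.1.2 : G ⧸ N)), himg _ _ p.2⟩,
      ⟨(s ((p.1.1 : G ⧸ N)))⁻¹ * p.1.1, hmem _⟩,
      ⟨(s ((p.1.2 : G ⧸ N)))⁻¹ * p.1.2, hmem _⟩⟩
  have hrec : ∀ x : G, s ((x : G ⧸ N)) * ((s ((x : G ⧸ N)))⁻¹ * x) = x := by
    intro x; group
  have hfinj : Function.Injective f := by
    intro p q h
    have h1 : ((p.1.1 : G ⧸ N), (p.1.2 : G ⧸ N)) = ((q.1.1 : G ⧸ N), (q.1.2 : G ⧸ N)) := by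
      have := congrArg (fun z => z.1.1) h
      simpa [f] using this
    have h11 : (p.1.1 : G ⧸ N) = (q.1.1 : G ⧸ N) := congrArg Prod.fst h1
    have h12 : (p.1.2 : G ⧸ N) = (q.1.2 : G ⧸ N) := congrArg Prod.snd h1
    have h2 : (s ((p.1.1 : G ⧸ N)))⁻¹ * p.1.1 = (s ((q.1.1 : G ⧸ N)))⁻¹ * q.1.1 := by
      have := congrArg (fun z => (z.2.1 : G)) h
      simpa [f] using this
    have h3 : (s ((p.1.2 : G ⧸ N)))⁻¹ * p.1.2 = (s ((q.1.2 : G ⧸ N)))⁻¹ * q.1.2 := by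
      have := congrArg (fun z => (z.2.2 : G)) h
      simpa [f] using this
    have e1 : p.1.1 = q.1.1 := by
      have := hrec p.1.1
      rw [h2, h11] at this
      rw [← this, hrec]
    have e2 : p.1.2 = q.1.2 := by
      have := hrec p.1.2
      rw [h3, h12] at this
      rw [← this, hrec]
    ext
    · exact e1
    · exact e2
  have hcardG : Nat.card G = Nat.card (G ⧸ N) * Nat.card N :=
    Subgroup.card_eq_card_quotient_mul_card_subgroup N
  have hGpos : 0 < Nat.card G := Nat.card_pos
  have hQpos : 0 < Nat.card (G ⧸ N) := Nat.card_pos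
  have hNpos : 0 < Nat.card N := Nat.card_pos
  have hcard_prod : Nat.card ({q : (G ⧸ N) × (G ⧸ N) // tq q.1 q.2 = 1} × (N × N)) =
      Nat.card {q : (G ⧸ N) × (G ⧸ N) // tq q.1 q.2 = 1} * (Nat.card N * Nat.card N) := by
    simp [Nat.card_prod]
  constructor
  · have hle : Nat.card {q : G × G // t q.1 q.2 = 1} ≤
        Nat.card {q : (G ⧸ N) × (G ⧸ N) // tq q.1 q.2 = 1} * (Nat.card N * Nat.card N) := by
      rw [← hcard_prod]
      exact Nat.card_le_card_of_injective f hfinj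
    rw [div_le_div_iff₀ (by positivity) (by positivity), hcardG]
    have hle' : (Nat.card {q : G × G // t q.1 q.2 = 1} : ℝ) ≤
        (Nat.card {q : (G ⧸ N) × (G ⧸ N) // tq q.1 q.2 = 1} : ℝ) *
          ((Nat.card N : ℝ) * (Nat.card N : ℝ)) := by exact_mod_cast hle
    push_cast
    have hq' : (0:ℝ) < (Nat.card (G ⧸ N) : ℝ) := by exact_mod_cast hQpos
    have hn' : (0:ℝ) < (Nat.card N : ℝ) := by exact_mod_cast hNpos
    nlinarith [hle', hq', hn', mul_pos hq' hq']
  · intro hZ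
    have hβinj := hinj hZ
    have hfsurj : Function.Surjective f := by
      rintro ⟨⟨⟨a, b⟩, hab⟩, ⟨m, hm⟩, ⟨n, hn⟩⟩
      refine ⟨⟨(s a * m, s b * n), ?_⟩, ?_⟩
      · apply hβinj
        rw [hβ, map_one]
        have ha : ((s a * m : G) : G ⧸ N) = a := by
          rw [QuotientGroup.mk_mul, (QuotientGroup.eq_one_iff m).mpr hm, mul_one, hsec]
        have hb : ((s b * n : G) : G ⧸ N) = b := by
          rw [QuotientGroup.mk_mul, (QuotientGroup.eq_one_iff n).mpr hn, mul_one, hsec]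
        rw [ha, hb]
        exact hab
      · have ha : ((s a * m : G) : G ⧸ N) = a := by
          rw [QuotientGroup.mk_mul, (QuotientGroup.eq_one_iff m).mpr hm, mul_one, hsec]
        have hb : ((s b * n : G) : G ⧸ N) = b := by
          rw [QuotientGroup.mk_mul, (QuotientGroup.eq_one_iff n).mpr hn, mul_one, hsec]
        simp only [f]
        ext <;> simp [ha, hb]
    have hbij : Function.Bijective f := ⟨hfinj, hfsurj⟩
    have hcard : Nat.card {q : G × G // t q.1 q.2 = 1} =
        Nat.card {q : (G ⧸ N) × (G ⧸ N) // tq q.1 q.2 = 1} * (Nat.card N * Nat.card N) := by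
      rw [← hcard_prod]
      exact Nat.card_eq_of_bijective f hbij
    rw [hcard, hcardG]
    have hq : (Nat.card (G ⧸ N) : ℝ) ≠ 0 := by positivity
    have hn : (Nat.card N : ℝ) ≠ 0 := by positivity
    push_cast
    field_simp
end

section
/- For a normal subgroup N of a finite group G the following are equivalent: (i) N ⊆ Z^⊗(G); (ii) d^⊗(G) = d^⊗(G/N); (iii) G ⊗ G ≅ (G/N) ⊗ (G/N) via the natural map. -/
/-- For a normal subgroup `N` of a finite group `G` the following are equivalent:
(i) `N ⊆ Z⊗(G)`; (ii) `d⊗(G) = d⊗(G/N)`; (iii) the natural map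
`G ⊗ G → (G/N) ⊗ (G/N)` is an isomorphism. The setup models the tensor squares by
groups `T`, `Tq` with pairings `t`, `tq`, tensor centralizers in `G` being subgroups,
the natural surjection `β` with `β(x ⊗ y) = xN ⊗ yN`, and Ellis' fact that
`N ⊆ Z⊗(G)` iff `β` is bijective. -/
theorem tensor_center_tfae_tensor_degree_quotient
    {G T Tq : Type*} [Group G] [Finite G] [Group T] [Group Tq]
    (N : Subgroup G) [N.Normal]
    (t : G → G → T) (tq : G ⧸ N → G ⧸ N → Tq)
    (C : G → Subgroup G) (hC : ∀ x a : G, a ∈ C x ↔ t a x = 1)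
    (β : T →* Tq)
    (hβ : ∀ x y : G, β (t x y) = tq (x : G ⧸ N) (y : G ⧸ N))
    (hβsurj : Function.Surjective β)
    (hEllis : (∀ n ∈ N, ∀ y : G, t n y = 1) ↔ Function.Bijective β) :
    ((∀ n ∈ N, ∀ y : G, t n y = 1) ↔
      (Nat.card {q : G × G // t q.1 q.2 = 1} : ℝ) / (Nat.card G : ℝ) ^ 2 =
        (Nat.card {q : (G ⧸ N) × (G ⧸ N) // tq q.1 q.2 = 1} : ℝ) /
          (Nat.card (G ⧸ N) : ℝ) ^ 2) ∧
    ((Nat.card {q : G × G // t q.1 q.2 = 1} : ℝ) / (Nat.card G : ℝ) ^ 2 =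
        (Nat.card {q : (G ⧸ N) × (G ⧸ N) // tq q.1 q.2 = 1} : ℝ) /
          (Nat.card (G ⧸ N) : ℝ) ^ 2 ↔
      Function.Bijective β) := by
  -- the "preimage" condition
  have hone : ∀ y : G, t 1 y = 1 := fun y => (hC y 1).mp (C y).one_mem
  -- equivalence computing the cardinality of the preimage set
  have hmk : ∀ (u : G ⧸ N) (n : N), (((n : G) * u.out : G) : G ⧸ N) = u := by
    intro u n
    have : ((n : G) : G ⧸ N) = 1 := (QuotientGroup.eq_one_iff _).mpr n.2
    rw [QuotientGroup.mk_mul, this, one_mul, QuotientGroup.out_eq']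
  have hmem : ∀ x : G, x * ((x : G ⧸ N).out)⁻¹ ∈ N := by
    intro x
    rw [← QuotientGroup.eq_one_iff, QuotientGroup.mk_mul, QuotientGroup.mk_inv,
      QuotientGroup.out_eq', mul_inv_cancel]
  have e : {p : G × G // tq (p.1 : G ⧸ N) (p.2 : G ⧸ N) = 1} ≃
      {q : (G ⧸ N) × (G ⧸ N) // tq q.1 q.2 = 1} × (N × N) :=
    { toFun := fun p =>
        (⟨((p.1.1 : G ⧸ N), (p.1.2 : G ⧸ N)), p.2⟩,
         (⟨p.1.1 * ((p.1.1 : G ⧸ N).out)⁻¹, hmem _⟩,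
          ⟨p.1.2 * ((p.1.2 : G ⧸ N).out)⁻¹, hmem _⟩))
      invFun := fun q =>
        ⟨((q.2.1 : G) * q.1.1.1.out, (q.2.2 : G) * q.1.1.2.out), by
          show tq (((q.2.1 : G) * q.1.1.1.out : G) : G ⧸ N)
            (((q.2.2 : G) * q.1.1.2.out : G) : G ⧸ N) = 1
          rw [hmk, hmk]; exact q.1.2⟩
      left_inv := fun p => by
        ext
        · show p.1.1 * ((p.1.1 : G ⧸ N).out)⁻¹ * _ = p.1.1
          simp
        · show p.1.2 * ((p.1.2 : G ⧸ N).out)⁻¹ * _ = p.1.2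
          simp
      right_inv := fun q => by
        have h1 := hmk q.1.1.1 q.2.1
        have h2 := hmk q.1.1.2 q.2.2
        ext
        · exact h1
        · exact h2
        · show (q.2.1 : G) * q.1.1.1.out *
            (((((q.2.1 : G) * q.1.1.1.out : G) : G ⧸ N)).out)⁻¹ = q.2.1
          rw [h1]; group
        · show (q.2.2 : G) * q.1.1.2.out *
            (((((q.2.2 : G) * q.1.1.2.out : G) : G ⧸ N)).out)⁻¹ = q.2.2
          rw [h2]; group }
  have hcardP : Nat.card {p : G × G // tq (p.1 : G ⧸ N) (p.2 : G ⧸ N) = 1} =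
      Nat.card {q : (G ⧸ N) × (G ⧸ N) // tq q.1 q.2 = 1} * Nat.card N ^ 2 := by
    rw [Nat.card_congr e, Nat.card_prod, Nat.card_prod, sq]
  have hG : Nat.card G = Nat.card (G ⧸ N) * Nat.card N :=
    Subgroup.card_eq_card_quotient_mul_card_subgroup N
  have hgq : (0:ℝ) < (Nat.card (G ⧸ N) : ℝ) := by exact_mod_cast Nat.card_pos
  have hn : (0:ℝ) < (Nat.card N : ℝ) := by exact_mod_cast Nat.card_pos
  -- arithmetic characterization of the ratio equality
  have harith : ((Nat.card {q : G × G // t q.1 q.2 = 1} : ℝ) / (Nat.card G : ℝ) ^ 2 =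
        (Nat.card {q : (G ⧸ N) × (G ⧸ N) // tq q.1 q.2 = 1} : ℝ) /
          (Nat.card (G ⧸ N) : ℝ) ^ 2) ↔
      Nat.card {q : G × G // t q.1 q.2 = 1} =
        Nat.card {q : (G ⧸ N) × (G ⧸ N) // tq q.1 q.2 = 1} * Nat.card N ^ 2 := by
    rw [hG]
    push_cast
    rw [div_eq_div_iff (by positivity) (by positivity)]
    constructor
    · intro h
      have : (Nat.card {q : G × G // t q.1 q.2 = 1} : ℝ) =
          (Nat.card {q : (G ⧸ N) × (G ⧸ N) // tq q.1 q.2 = 1} : ℝ) * (Nat.card N : ℝ) ^ 2 := by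
        have hgq2 : (0:ℝ) < (Nat.card (G ⧸ N) : ℝ) ^ 2 := by positivity
        apply mul_right_cancel₀ (ne_of_gt hgq2)
        nlinarith [h]
      exact_mod_cast this
    · intro h
      have h' : (Nat.card {q : G × G // t q.1 q.2 = 1} : ℝ) =
          (Nat.card {q : (G ⧸ N) × (G ⧸ N) // tq q.1 q.2 = 1} : ℝ) * (Nat.card N : ℝ) ^ 2 := by
        exact_mod_cast h
      nlinarith [h']
  -- S ⊆ P always
  have hSsubP : ∀ p : G × G, t p.1 p.2 = 1 → tq (p.1 : G ⧸ N) (p.2 : G ⧸ N) = 1 := by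
    intro p h
    rw [← hβ, h, map_one]
  -- the key iff: (i) ↔ equality of cardinals
  have hkey : (∀ n ∈ N, ∀ y : G, t n y = 1) ↔
      Nat.card {q : G × G // t q.1 q.2 = 1} =
        Nat.card {q : (G ⧸ N) × (G ⧸ N) // tq q.1 q.2 = 1} * Nat.card N ^ 2 := by
    constructor
    · intro hi
      have hb := hEllis.mp hi
      have hiff : ∀ x y : G, t x y = 1 ↔ tq (x : G ⧸ N) (y : G ⧸ N) = 1 := by
        intro x y
        constructor
        · exact hSsubP (x, y)
        · intro h
          apply hb.1
          rw [hβ, h, map_one]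
      rw [← hcardP]
      exact Nat.card_congr (Equiv.subtypeEquivRight fun p => hiff p.1 p.2)
    · intro hcard
      -- deduce the set equality S = P
      have hAB : {p : G × G | t p.1 p.2 = 1} ⊆ {p : G × G | tq (p.1 : G ⧸ N) (p.2 : G ⧸ N) = 1} :=
        fun p hp => hSsubP p hp
      have hA : Nat.card {q : G × G // t q.1 q.2 = 1} = {p : G × G | t p.1 p.2 = 1}.ncard :=
        Nat.card_coe_set_eq _
      have hB : Nat.card {p : G × G // tq (p.1 : G ⧸ N) (p.2 : G ⧸ N) = 1} =
          {p : G × G | tq (p.1 : G ⧸ N) (p.2 : G ⧸ N) = 1}.ncard :=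
        Nat.card_coe_set_eq _
      have heq : {p : G × G | t p.1 p.2 = 1} =
          {p : G × G | tq (p.1 : G ⧸ N) (p.2 : G ⧸ N) = 1} := by
        apply Set.eq_of_subset_of_ncard_le hAB _ (Set.toFinite _)
        rw [← hA, ← hB, hcardP, hcard]
      intro n hn y
      have hmem : (n, y) ∈ {p : G × G | tq (p.1 : G ⧸ N) (p.2 : G ⧸ N) = 1} := by
        show tq (n : G ⧸ N) (y : G ⧸ N) = 1
        have h1 : ((1 : G) : G ⧸ N) = 1 := rfl
        rw [(QuotientGroup.eq_one_iff n).mpr hn, ← h1, ← hβ, hone, map_one]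
      rw [← heq] at hmem
      exact hmem
  exact ⟨hkey.trans harith.symm, harith.trans hkey.symm |>.trans hEllis⟩
end

section
/- Let G be a finite group, p the smallest prime divisor of |G|, and suppose there exists x ∉ Z(G) with C_G^⊗(x) ≠ C_G(x). Then d^⊗(G) ≤ d(G) − (1 − 1/p)·(|Z(G)| − |Z^⊗(G)| − 1)/|G|. -/
/-!
Count pairs by their second coordinate: `|G|² d⊗(G) = ∑_y |C_G^⊗(y)|` and `|G|² d(G) = ∑_y |C_G(y)|`.
Termwise `C_G^⊗(y) ≤ C_G(y)`, and for `y ∈ Z(G) \ Z⊗(G)` the gap is at least `|G| (1 - 1/p)`,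
since then `C_G(y) = G` while `|C_G^⊗(y)| ≤ |G|/p`. There are at least `|Z(G)| - |Z⊗(G)|` such `y`.
-/

open scoped commutatorElement

open Finset Subgroup

theorem card_subtype_prod_eq_sum_card_fiber {α β : Type*} [Finite α] [Fintype β]
    (P : α → β → Prop) :
    Nat.card {q : α × β // P q.1 q.2} = ∑ b, Nat.card {a // P a b} := by
  rw [← Nat.card_sigma]
  exact Nat.card_congr <| ((Equiv.prodComm α β).subtypeEquiv fun _ => Iff.rfl).trans
    (Equiv.subtypeProdEquivSigmaSubtype fun b a => P a b)

theorem card_commute_pairs_eq_sum_card_centralizer (G : Type*) [Group G] [Fintype G] :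
    Nat.card {q : G × G // Commute q.1 q.2} = ∑ y : G, Nat.card (centralizer {y}) := by
  rw [card_subtype_prod_eq_sum_card_fiber]
  refine sum_congr rfl fun y _ => Nat.card_congr (Equiv.subtypeEquivRight fun a => ?_)
  exact mem_centralizer_singleton_iff.symm

theorem card_centralizer_singleton_of_mem_center {G : Type*} [Group G] {z : G}
    (hz : z ∈ center G) : Nat.card (centralizer {z}) = Nat.card G := by
  rw [centralizer_eq_top_iff_subset.mpr (Set.singleton_subset_iff.mpr hz), card_top]

theorem card_subtype_le_card_filter_and_not_add {α : Type*} [Fintype α] (P Q : α → Prop)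
    [DecidablePred P] [DecidablePred Q] :
    Nat.card {a // P a} ≤ #{a | P a ∧ ¬ Q a} + Nat.card {a // Q a} := by
  classical
  have hdiff : univ.filter (fun a => P a ∧ ¬ Q a) = univ.filter P \ univ.filter Q := by
    ext; simp
  rw [Nat.card_eq_fintype_card, Nat.card_eq_fintype_card, Fintype.card_subtype,
    Fintype.card_subtype, hdiff]
  exact card_le_card_sdiff_add_card

theorem Finset.sum_add_card_nsmul_le_sum {ι M : Type*} [Fintype ι] [AddCommMonoid M]
    [PartialOrder M] [IsOrderedAddMonoid M] (s : Finset ι) {f g : ι → M} {c : M}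
    (hle : ∀ i ∉ s, f i ≤ g i) (hs : ∀ i ∈ s, f i + c ≤ g i) :
    ∑ i, f i + #s • c ≤ ∑ i, g i := by
  classical
  rw [← sum_add_sum_compl s f, ← sum_add_sum_compl s g, add_right_comm, ← sum_const,
    ← sum_add_distrib]
  exact add_le_add (sum_le_sum hs) (sum_le_sum fun i hi => hle i (mem_compl.mp hi))

theorem sum_card_add_le_sum_card_centralizer {G : Type*} [Group G] [Fintype G]
    (C : G → Subgroup G) (hCle : ∀ y, C y ≤ centralizer {y}) {p : ℕ} (hp : 0 < p)
    (S : Finset G) (hSZ : ∀ y ∈ S, y ∈ center G)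
    (hSp : ∀ y ∈ S, p * Nat.card (C y) ≤ Nat.card G) :
    ∑ y : G, (Nat.card (C y) : ℝ) + #S * (Nat.card G * (1 - 1 / p)) ≤
      ∑ y : G, (Nat.card (centralizer {y}) : ℝ) := by
  rw [← nsmul_eq_mul]
  refine S.sum_add_card_nsmul_le_sum (fun y _ => ?_) fun y hy => ?_
  · exact_mod_cast card_le_of_le (hCle y)
  · rw [card_centralizer_singleton_of_mem_center (hSZ y hy)]
    have hCy : (Nat.card (C y) : ℝ) ≤ Nat.card G / p := by
      rw [le_div_iff₀' (by exact_mod_cast hp)]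
      exact_mod_cast hSp y hy
    linarith [show (Nat.card G : ℝ) * (1 - 1 / p) = Nat.card G - Nat.card G / p by ring]

theorem tensor_degree_sharp_upper_bound_general
    {G T : Type*} [Group G] [Fintype G] [Group T]
    (t : G → G → T)
    (p : ℕ) (hp : p.Prime)
    (C : G → Subgroup G) (hC : ∀ x a : G, a ∈ C x ↔ t a x = 1)
    (hCle : ∀ x : G, C x ≤ Subgroup.centralizer {x})
    (hindex : ∀ x : G, (¬ ∀ y : G, t x y = 1) → p * Nat.card (C x) ≤ Fintype.card G)
    (x : G) :
    (Nat.card {q : G × G // t q.1 q.2 = 1} : ℝ) / (Fintype.card G : ℝ) ^ 2 ≤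
      (Nat.card {q : G × G // Commute q.1 q.2} : ℝ) / (Fintype.card G : ℝ) ^ 2 -
        (1 - 1 / (p : ℝ)) *
          (((Nat.card (Subgroup.center G) : ℝ) -
            (Nat.card {g : G // ∀ y : G, t g y = 1} : ℝ) - 1) / (Fintype.card G : ℝ)) := by
  classical
  simp only [← Nat.card_eq_fintype_card] at hindex ⊢
  set n : ℝ := (Nat.card G : ℝ)
  set S : Finset G := {g | g ∈ center G ∧ ¬ ∀ y, t g y = 1}
  have hTensor : Nat.card {q : G × G // t q.1 q.2 = 1} = ∑ y, Nat.card (C y) := by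
    refine (card_subtype_prod_eq_sum_card_fiber fun a b => t a b = 1).trans ?_
    exact sum_congr rfl fun y _ =>
      Nat.card_congr (Equiv.subtypeEquivRight fun a => (hC y a).symm)
  have hsum := sum_card_add_le_sum_card_centralizer C hCle hp.pos S
    (fun y hy => (mem_filter.mp hy).2.1) (fun y hy => hindex y (mem_filter.mp hy).2.2)
  have hS : (Nat.card (center G) : ℝ) - Nat.card {g : G // ∀ y, t g y = 1} ≤ #S := by
    have := card_subtype_le_card_filter_and_not_add (· ∈ center G) (fun g => ∀ y, t g y = 1)
    rw [sub_le_iff_le_add]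
    exact_mod_cast this
  have hn : 0 < n := Nat.cast_pos.mpr Nat.card_pos
  have hp1 : 0 ≤ 1 - 1 / (p : ℝ) :=
    sub_nonneg.mpr (div_le_one_of_le₀ (by exact_mod_cast hp.one_le) (by positivity))
  rw [hTensor, card_commute_pairs_eq_sum_card_centralizer]
  push_cast
  have hgap : (1 - 1 / (p : ℝ)) * (((Nat.card (center G) : ℝ) -
      Nat.card {g : G // ∀ y, t g y = 1} - 1) / n) ≤
      (∑ y, (Nat.card (centralizer {y}) : ℝ)) / n ^ 2 - (∑ y, (Nat.card (C y) : ℝ)) / n ^ 2 :=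
    calc _ ≤ (1 - 1 / (p : ℝ)) * (#S / n) := by
          gcongr; exact (sub_le_self _ zero_le_one).trans hS
      _ = #S * (n * (1 - 1 / p)) / n ^ 2 := by field_simp
      _ ≤ _ := by rw [← sub_div]; gcongr; exact le_sub_iff_add_le'.mpr hsum
  exact le_sub_comm.mp hgap

/-- Sharpened upper bound (Proposition 3.3): let `G` be a finite group, `p` the smallest
prime divisor of `|G|`, and suppose there is `x ∉ Z(G)` with `C_G^⊗(x) ≠ C_G(x)`. Then
`d⊗(G) ≤ d(G) − (1 − 1/p)(|Z(G)| − |Z⊗(G)| − 1)/|G|`. The tensor square is modelled by a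
group `T`, a pairing `t`, the commutator homomorphism `κ`, with tensor centralizers
being subgroups of the centralizers, conjugation invariance, and the index bound
`|G : C_G^⊗(x)| ≥ p` for `x ∉ Z⊗(G)`. -/
theorem tensor_degree_sharp_upper_bound
    {G T : Type*} [Group G] [Fintype G] [Group T]
    (t : G → G → T) (κ : T →* G)
    (hκ : ∀ a b : G, κ (t a b) = ⁅a, b⁆)
    (hconj : ∀ g a x : G, t a x = 1 ↔ t (g⁻¹ * a * g) (g⁻¹ * x * g) = 1)
    (p : ℕ) (hp : p.Prime) (hdvd : p ∣ Fintype.card G)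
    (hmin : ∀ q : ℕ, q.Prime → q ∣ Fintype.card G → p ≤ q)
    (C : G → Subgroup G) (hC : ∀ x a : G, a ∈ C x ↔ t a x = 1)
    (hCle : ∀ x : G, C x ≤ Subgroup.centralizer {x})
    (hindex : ∀ x : G, (¬ ∀ y : G, t x y = 1) → p * Nat.card (C x) ≤ Fintype.card G)
    (x : G) (hx : x ∉ Subgroup.center G) (hxC : C x ≠ Subgroup.centralizer {x}) :
    (Nat.card {q : G × G // t q.1 q.2 = 1} : ℝ) / (Fintype.card G : ℝ) ^ 2 ≤
      (Nat.card {q : G × G // Commute q.1 q.2} : ℝ) / (Fintype.card G : ℝ) ^ 2 -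
        (1 - 1 / (p : ℝ)) *
          (((Nat.card (Subgroup.center G) : ℝ) -
            (Nat.card {g : G // ∀ y : G, t g y = 1} : ℝ) - 1) / (Fintype.card G : ℝ)) :=
  tensor_degree_sharp_upper_bound_general t p hp C hC hCle hindex x
end

section
/- If G is a finite nonabelian group with trivial tensor center Z^⊗(G) = 1 and p is the smallest prime dividing |G|, then d^⊗(G) ≤ 1/p. -/
/-!
Write the number of pairs as `∑ₓ |C(x)|`; since the tensor center is trivial, `p |C(x)| ≤ |G|`
for `x ≠ 1`.

If some noncentral `g` has `C(g) < C_G(g)`, then each of the at least `p` conjugates `x` of `g`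
has `p² |C(x)| ≤ |G|`, which compensates for the term `|C(1)| = |G|`.

Otherwise `C(x) = C_G(x)` off the center, which forces `Z(G) ∩ G' = 1`, and the count is the
commuting count `k(G) |G|` corrected on the center; it remains to show
`p (m + 1) + |Z(G)| ≤ |G| + 1` for the number `m` of noncentral classes. These classes have
size at least `p`, and some class is larger: were they all of size `p`, every centralizer of a
noncentral element would be normal of index `p`, making `G'` central. Its translates by the
`|Z(G)|` central elements are distinct classes of the same size, so the class equation gives
`|G| ≥ p m + 2 |Z(G)|`, which suffices since `p ∣ |G|`, and `|Z(G)| ≥ p` unless `Z(G) = 1`.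
-/

open scoped commutatorElement

open Subgroup ConjClasses Finset

section

variable {G : Type*} [Group G]

theorem ConjClasses.nat_card_carrier_mk (g : G) :
    Nat.card (ConjClasses.mk g).carrier = (centralizer {g}).index := by
  have h := MulAction.index_stabilizer (ConjAct G) g
  rw [ConjAct.orbit_eq_carrier_conjClasses] at h
  rw [Nat.card_coe_set_eq, ← h, centralizer_eq_comap_stabilizer]
  exact (index_comap_of_surjective (f := ConjAct.toConjAct.toMonoidHom) _
    ConjAct.toConjAct.surjective).symm

theorem Subgroup.centralizer_mul_left_of_mem_center {z : G} (hz : z ∈ center G) (g : G) :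
    centralizer {z * g} = centralizer {g} := by
  ext k
  rw [mem_centralizer_singleton_iff, mem_centralizer_singleton_iff, ← mul_assoc,
    mem_center_iff.mp hz k, mul_assoc, mul_assoc, mul_right_inj]

theorem commutatorElement_mem_commutator (g h : G) : ⁅g, h⁆ ∈ commutator G := by
  rw [_root_.commutator_def]
  exact commutator_mem_commutator (mem_top g) (mem_top h)

theorem ConjClasses.mk_mul_left_injective (hZ : center G ⊓ commutator G = ⊥) (g : G) :
    Function.Injective fun z : center G => ConjClasses.mk (z * g) := by
  rintro ⟨z, hz⟩ ⟨z', hz'⟩ h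
  obtain ⟨c, hc⟩ := isConj_iff.mp (mk_eq_mk_iff_isConj.mp h)
  have hzc : z * (c * g * c⁻¹) = z' * g := by
    rw [← hc, ← mul_assoc c, mem_center_iff.mp hz c]; group
  have hcomm : z'⁻¹ * z = ⁅g, c⁆ :=
    calc z'⁻¹ * z = z'⁻¹ * (z * (c * g * c⁻¹)) * (c * g * c⁻¹)⁻¹ := by group
      _ = ⁅g, c⁆ := by rw [hzc, commutatorElement_def]; group
  have hmem : z'⁻¹ * z ∈ center G ⊓ commutator G :=
    ⟨(center G).mul_mem ((center G).inv_mem hz') hz,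
      hcomm ▸ commutatorElement_mem_commutator g c⟩
  rw [hZ, mem_bot, inv_mul_eq_one] at hmem
  exact Subtype.ext hmem.symm

theorem ConjClasses.mk_mem_noncenter_iff {g : G} :
    ConjClasses.mk g ∈ noncenter G ↔ g ∉ center G := by
  refine ⟨fun h hg => (mk_bijOn G).mapsTo hg h, fun hg => by_contra fun h => ?_⟩
  obtain ⟨c, hc, hcg⟩ := (mk_bijOn G).surjOn h
  exact hg ((mk_eq_mk_iff_isConj.mp hcg).eq_of_left_mem_center hc ▸ hc)

theorem ConjClasses.nat_card_eq_card_center_add_card_noncenter [Finite G] :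
    Nat.card (ConjClasses G) = Nat.card (center G) + Nat.card (noncenter G) := by
  rw [← Set.ncard_add_ncard_compl (noncenter G), add_comm, ← Nat.card_coe_set_eq,
    ← Nat.card_coe_set_eq]
  exact congrArg (· + _) (Nat.card_congr ((mk_bijOn G).equiv _).symm)

theorem nat_card_subtype_fst_mem_eq_sum {α β : Type*} [Finite α] [Fintype β]
    (S : β → Set α) :
    Nat.card {q : α × β // q.1 ∈ S q.2} = ∑ b, Nat.card (S b) := by
  rw [← Nat.card_sigma]
  exact Nat.card_congr ((Equiv.prodComm α β).subtypeEquiv (fun _ => Iff.rfl) |>.trans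
    (Equiv.subtypeProdEquivSigmaSubtype fun b a => a ∈ S b))

theorem sum_nat_card_centralizer [Fintype G] :
    ∑ g : G, Nat.card (centralizer {g}) = Nat.card (ConjClasses G) * Nat.card G := by
  rw [← card_comm_eq_card_conjClasses_mul_card]
  calc ∑ g : G, Nat.card (centralizer {g})
      = Nat.card {q : G × G // q.1 ∈ (centralizer {q.2} : Set G)} :=
        (nat_card_subtype_fst_mem_eq_sum _).symm
    _ = _ := Nat.card_congr (Equiv.subtypeEquivRight fun _ => mem_centralizer_singleton_iff)

theorem Subgroup.centralizer_inf_centralizer_le_centralizer_commutatorElement (x y : G) :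
    centralizer {x} ⊓ centralizer {y} ≤ centralizer {⁅x, y⁆} := by
  rintro g ⟨hgx, hgy⟩
  have hgx : Commute g x := mem_centralizer_singleton_iff.mp hgx
  have hgy : Commute g y := mem_centralizer_singleton_iff.mp hgy
  rw [mem_centralizer_singleton_iff, commutatorElement_def]
  exact ((hgx.mul_right hgy).mul_right hgx.inv_right).mul_right hgy.inv_right

theorem Subgroup.mem_centralizer_commutatorElement_left {x : G} [(centralizer {x}).Normal]
    (y : G) : x ∈ centralizer {⁅x, y⁆} := by
  have hxx : x ∈ centralizer {x} := mem_centralizer_singleton_iff.mpr rfl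
  have := commutator_le_left _ ⊤ (commutator_mem_commutator hxx (mem_top y))
  exact mem_centralizer_singleton_iff.mpr (mem_centralizer_singleton_iff.mp this).symm

theorem Subgroup.mem_centralizer_commutatorElement_right {y : G} [(centralizer {y}).Normal]
    (x : G) : y ∈ centralizer {⁅x, y⁆} := by
  have hyy : y ∈ centralizer {y} := mem_centralizer_singleton_iff.mpr rfl
  have := commutator_le_right ⊤ _ (commutator_mem_commutator (mem_top x) hyy)
  exact mem_centralizer_singleton_iff.mpr (mem_centralizer_singleton_iff.mp this).symm

theorem nat_card_eq_of_isConj {C : G → Subgroup G}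
    (hC : ∀ g a x, a ∈ C x ↔ g⁻¹ * a * g ∈ C (g⁻¹ * x * g)) {x y : G} (hxy : IsConj x y) :
    Nat.card (C x) = Nat.card (C y) := by
  obtain ⟨c, rfl⟩ := isConj_iff.mp hxy
  refine Nat.card_congr ((MulAut.conj c).toEquiv.subtypeEquiv fun a => ?_)
  simpa using hC c⁻¹ a x

section Finite

variable [Finite G]

theorem Subgroup.minFac_card_le_relIndex {H K : Subgroup G} (h : ¬K ≤ H) :
    (Nat.card G).minFac ≤ H.relIndex K := by
  have hdvd : H.relIndex K ∣ Nat.card G :=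
    (H.relIndex_dvd_card K).trans K.card_subgroup_dvd_card
  have h0 : H.relIndex K ≠ 0 := (Nat.pos_of_dvd_of_pos hdvd Nat.card_pos).ne'
  have h1 : H.relIndex K ≠ 1 := mt relIndex_eq_one.mp h
  exact Nat.minFac_le_of_dvd (by omega) hdvd

theorem Subgroup.minFac_card_mul_card_le_of_lt {H K : Subgroup G} (h : H < K) :
    (Nat.card G).minFac * Nat.card H ≤ Nat.card K := by
  calc (Nat.card G).minFac * Nat.card H ≤ H.relIndex K * Nat.card H :=
        Nat.mul_le_mul_right _ (minFac_card_le_relIndex h.not_ge)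
    _ = Nat.card K := by
        rw [← relIndex_bot_left, ← relIndex_bot_left, mul_comm,
          relIndex_mul_relIndex _ _ _ bot_le h.le]

theorem Subgroup.minFac_card_le_index_centralizer {g : G} (hg : g ∉ center G) :
    (Nat.card G).minFac ≤ (centralizer {g}).index := by
  rw [← relIndex_top_right]
  refine minFac_card_le_relIndex fun h => hg ?_
  exact centralizer_eq_top_iff_subset.mp (top_le_iff.mp h) rfl

theorem commutatorElement_mem_center_of_index_centralizer_eq_minFac
    (h : ∀ g ∉ center G, (centralizer {g}).index = (Nat.card G).minFac) (x y : G) :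
    ⁅x, y⁆ ∈ center G := by
  set p := (Nat.card G).minFac
  by_contra hc
  have hxy : ¬Commute x y := fun hxy =>
    hc (commutatorElement_eq_one_iff_commute.mpr hxy ▸ one_mem _)
  have hx : x ∉ center G := fun hx => hxy (mem_center_iff.mp hx y).symm
  have hy : y ∉ center G := fun hy => hxy (mem_center_iff.mp hy x)
  have := normal_of_index_eq_minFac_card (h x hx)
  have := normal_of_index_eq_minFac_card (h y hy)
  have hxM := mem_centralizer_commutatorElement_left (x := x) y
  have hyM := mem_centralizer_commutatorElement_right (y := y) x
  -- `I < W < M < ⊤`, so `|G : I| ≥ p³`, whereas `|G : I| ≤ |G : C(x)| |G : C(y)| = p²`.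
  set M := centralizer {⁅x, y⁆}
  set I := centralizer {x} ⊓ centralizer {y}
  set W := M ⊓ centralizer {x}
  have hIW : I < W := by
    refine lt_of_le_of_ne (le_inf (centralizer_inf_centralizer_le_centralizer_commutatorElement
      x y) inf_le_left) fun hIW => hxy ?_
    have : x ∈ I := hIW ▸ ⟨hxM, mem_centralizer_singleton_iff.mpr rfl⟩
    exact mem_centralizer_singleton_iff.mp this.2
  have hWM : W < M := by
    refine lt_of_le_of_ne inf_le_left fun hWM => hxy ?_
    have : y ∈ W := hWM ▸ hyM
    exact (mem_centralizer_singleton_iff.mp this.2).symm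
  have hM : Nat.card M * p = Nat.card G := h _ hc ▸ card_mul_index M
  have hI : Nat.card G ≤ Nat.card I * (p * p) := by
    have hidx := index_inf_le (H := centralizer {x}) (K := centralizer {y})
    rw [h x hx, h y hy] at hidx
    exact card_mul_index I ▸ Nat.mul_le_mul_left _ hidx
  have hIW' : p * Nat.card I ≤ Nat.card W := minFac_card_mul_card_le_of_lt hIW
  have hWM' : p * Nat.card W ≤ Nat.card M := minFac_card_mul_card_le_of_lt hWM
  have hp : 1 < p := h x hx ▸ one_lt_index_of_ne_top fun htop =>
    hx (centralizer_eq_top_iff_subset.mp htop rfl)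
  have hIpos : 0 < Nat.card I := Nat.card_pos
  nlinarith

theorem exists_minFac_lt_index_centralizer
    (hZ : center G ⊓ commutator G = ⊥) (hG : ∃ x y : G, ¬Commute x y) :
    ∃ g ∉ center G, (Nat.card G).minFac < (centralizer {g}).index := by
  by_contra! h
  obtain ⟨x, y, hxy⟩ := hG
  have hmem : ⁅x, y⁆ ∈ center G ⊓ commutator G := by
    refine ⟨commutatorElement_mem_center_of_index_centralizer_eq_minFac (fun g hg => ?_) x y,
      commutatorElement_mem_commutator x y⟩
    exact le_antisymm (h g hg) (minFac_card_le_index_centralizer hg)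
  rw [hZ, mem_bot, commutatorElement_eq_one_iff_commute] at hmem
  exact hxy hmem

theorem minFac_mul_card_noncenter_add_card_center_le_finsum
    (hZ : center G ⊓ commutator G = ⊥) (hG : ∃ x y : G, ¬Commute x y) :
    (Nat.card G).minFac * Nat.card (noncenter G) + Nat.card (center G) ≤
      ∑ᶠ K ∈ noncenter G, Nat.card K.carrier := by
  classical
  have := Fintype.ofFinite G
  rw [finsum_mem_eq_toFinset_sum, Nat.card_eq_card_toFinset (noncenter G)]
  set p := (Nat.card G).minFac
  set S := (noncenter G).toFinset
  have hsize : ∀ K ∈ S, p ≤ Nat.card K.carrier := by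
    intro K hK
    obtain ⟨g, rfl⟩ := ConjClasses.mk_surjective K
    exact nat_card_carrier_mk g ▸ minFac_card_le_index_centralizer
      (mk_mem_noncenter_iff.mp (Set.mem_toFinset.mp hK))
  obtain ⟨g, hg, hgp⟩ := exists_minFac_lt_index_centralizer hZ hG
  -- the classes of the translates `z g`, `z ∈ Z(G)`, are distinct and larger than `p`
  set T := univ.image fun z : center G => ConjClasses.mk (z * g)
  have hT : #T = Nat.card (center G) := by
    rw [card_image_of_injective univ (mk_mul_left_injective hZ g), card_univ,
      Nat.card_eq_fintype_card]
  have hTsize : ∀ K ∈ T, K ∈ S ∧ p + 1 ≤ Nat.card K.carrier := by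
    simp only [T, mem_image, mem_univ, true_and]
    rintro K ⟨z, rfl⟩
    refine ⟨Set.mem_toFinset.mpr (mk_mem_noncenter_iff.mpr fun hzg => hg ?_), ?_⟩
    · simpa using (center G).mul_mem ((center G).inv_mem z.2) hzg
    · rwa [nat_card_carrier_mk, centralizer_mul_left_of_mem_center z.2]
  calc p * #S + Nat.card (center G) = ∑ K ∈ S, (p + if K ∈ T then 1 else 0) := by
        rw [sum_add_distrib, sum_const, sum_boole, filter_mem_eq_inter,
          inter_eq_right.mpr fun K hK => (hTsize K hK).1, smul_eq_mul, mul_comm, Nat.cast_id, hT]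
    _ ≤ _ := sum_le_sum fun K hK => by
        split_ifs with hKT
        exacts [(hTsize K hKT).2, hsize K hK]

theorem minFac_mul_card_noncenter_add_card_center_le
    (hZ : center G ⊓ commutator G = ⊥) (hG : ∃ x y : G, ¬Commute x y) :
    (Nat.card G).minFac * (Nat.card (noncenter G) + 1) + Nat.card (center G) ≤
      Nat.card G + 1 := by
  have hclass := Group.nat_card_center_add_sum_card_noncenter_eq_card G
  have hsum := minFac_mul_card_noncenter_add_card_center_le_finsum hZ hG
  set p := (Nat.card G).minFac
  by_cases hz : Nat.card (center G) = 1
  · obtain ⟨k, hk⟩ : p ∣ Nat.card G := Nat.minFac_dvd _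
    have : Nat.card (noncenter G) < k := by nlinarith
    nlinarith
  · have hpz : p ≤ Nat.card (center G) :=
      Nat.minFac_le_of_dvd (by have := Nat.card_pos (α := center G); omega)
        (card_subgroup_dvd_card _)
    rw [mul_add, mul_one]
    omega

end Finite

section SubgroupFamily

variable [Fintype G] {C : G → Subgroup G}

theorem minFac_mul_sum_card_add_card_le
    (hC : ∀ x ≠ 1, (Nat.card G).minFac * Nat.card (C x) ≤ Nat.card G) (s : Finset G) :
    (Nat.card G).minFac * ∑ x ∈ s, Nat.card (C x) + Nat.card G ≤
      (#s + (Nat.card G).minFac) * Nat.card G := by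
  classical
  set p := (Nat.card G).minFac
  set n := Nat.card G
  have hsum (t : Finset G) (ht : 1 ∉ t) : p * ∑ x ∈ t, Nat.card (C x) ≤ #t * n := by
    rw [mul_sum]
    exact sum_le_card_nsmul t _ n fun x hx => hC x (ne_of_mem_of_not_mem hx ht)
  by_cases h1 : 1 ∈ s
  · have hC1 : Nat.card (C 1) ≤ n := (C 1).card_le_card_group
    have := hsum (s.erase 1) (notMem_erase 1 s)
    rw [← add_sum_erase s _ h1, ← card_erase_add_one h1]
    nlinarith
  · have := hsum s h1
    have : 1 ≤ p := Nat.minFac_pos n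
    nlinarith

theorem minFac_mul_sum_card_le_sq_of_ne_centralizer
    (hC : ∀ x ≠ 1, (Nat.card G).minFac * Nat.card (C x) ≤ Nat.card G)
    (hCle : ∀ x, C x ≤ centralizer {x})
    (hconj : ∀ x y, IsConj x y → Nat.card (C x) = Nat.card (C y))
    {g : G} (hg : g ∉ center G) (hgC : C g ≠ centralizer {g}) :
    (Nat.card G).minFac * ∑ x, Nat.card (C x) ≤ Nat.card G ^ 2 := by
  classical
  set p := (Nat.card G).minFac
  set n := Nat.card G
  set D := (ConjClasses.mk g).carrier.toFinset
  have hD : p ≤ #D := by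
    rw [← Nat.card_eq_card_toFinset, nat_card_carrier_mk]
    exact minFac_card_le_index_centralizer hg
  have hCD : ∀ x ∈ D, p * p * Nat.card (C x) ≤ n := by
    intro x hx
    rw [Set.mem_toFinset, mem_carrier_iff_mk_eq, mk_eq_mk_iff_isConj] at hx
    rw [← hconj g x hx.symm]
    have h1 : p * Nat.card (C g) ≤ Nat.card (centralizer {g}) :=
      minFac_card_mul_card_le_of_lt (lt_of_le_of_ne (hCle g) hgC)
    have h2 : Nat.card (centralizer {g}) * p ≤ n :=
      calc Nat.card (centralizer {g}) * p
          ≤ Nat.card (centralizer {g}) * (centralizer {g}).index :=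
            Nat.mul_le_mul_left _ (minFac_card_le_index_centralizer hg)
        _ = n := card_mul_index _
    nlinarith
  have hsumD : p * p * ∑ x ∈ D, Nat.card (C x) ≤ #D * n := by
    rw [mul_sum]
    exact sum_le_card_nsmul D _ n hCD
  have hsumDc : p * ∑ x ∈ Dᶜ, Nat.card (C x) + n ≤ (#Dᶜ + p) * n :=
    minFac_mul_sum_card_add_card_le hC Dᶜ
  have hcard : #Dᶜ + #D = n := by
    rw [card_compl_add_card]
    exact Nat.card_eq_fintype_card.symm
  have hp : 0 < p := Nat.minFac_pos n
  have hpD : p * p + #D ≤ p * #D + p := by nlinarith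
  have hn : p * (#Dᶜ + #D) * n = p * n ^ 2 := by rw [hcard, sq, mul_assoc]
  refine Nat.le_of_mul_le_mul_left ?_ hp
  rw [← sum_compl_add_sum D]
  nlinarith [Nat.mul_le_mul_left p hsumDc, Nat.mul_le_mul_right n hpD]

theorem minFac_mul_sum_card_le_sq_of_eq_centralizer
    (hC : ∀ x ≠ 1, (Nat.card G).minFac * Nat.card (C x) ≤ Nat.card G)
    (hCeq : ∀ x ∉ center G, C x = centralizer {x})
    (hZ : center G ⊓ commutator G = ⊥) (hG : ∃ x y : G, ¬Commute x y) :
    (Nat.card G).minFac * ∑ x, Nat.card (C x) ≤ Nat.card G ^ 2 := by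
  classical
  set p := (Nat.card G).minFac
  set n := Nat.card G
  have htotal : ∑ x, Nat.card (centralizer {x}) = Nat.card (ConjClasses G) * n :=
    sum_nat_card_centralizer
  rw [← sum_filter_add_sum_filter_not univ (· ∈ center G),
    nat_card_eq_card_center_add_card_noncenter] at htotal
  rw [← sum_filter_add_sum_filter_not univ (· ∈ center G)]
  set Z := univ.filter (· ∈ center G)
  have hZ_card : #Z = Nat.card (center G) := by
    rw [← Fintype.card_subtype, Nat.card_eq_fintype_card]
  have hsum_Z : ∑ x ∈ Z, Nat.card (centralizer {x}) = #Z * n := by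
    rw [← smul_eq_mul, ← sum_const]
    refine sum_congr rfl fun x hx => ?_
    rw [centralizer_eq_top_iff_subset.mpr (Set.singleton_subset_iff.mpr (mem_filter.mp hx).2),
      card_top]
  have hsum_noncenter : ∑ x ∈ univ.filter (· ∉ center G), Nat.card (C x) =
      ∑ x ∈ univ.filter (· ∉ center G), Nat.card (centralizer {x}) :=
    sum_congr rfl fun x hx => by rw [hCeq x (mem_filter.mp hx).2]
  -- `∑_{x ∉ Z(G)} |C_G(x)| = m |G|`, as `∑ₓ |C_G(x)| = k(G) |G|` with `k(G) = |Z(G)| + m`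
  rw [hsum_Z, hZ_card, add_mul, add_right_inj] at htotal
  rw [hsum_noncenter, htotal]
  have hZsum : p * ∑ x ∈ Z, Nat.card (C x) + n ≤ (#Z + p) * n :=
    minFac_mul_sum_card_add_card_le hC Z
  have hB : p * (Nat.card (noncenter G) + 1) + Nat.card (center G) ≤ n + 1 :=
    minFac_mul_card_noncenter_add_card_center_le hZ hG
  nlinarith [Nat.mul_le_mul_right n hB]

end SubgroupFamily

end

theorem tensor_degree_le_one_div_p_of_trivial_tensor_center_general
    {G T : Type*} [Group G] [Fintype G] [Group T]
    (t : G → G → T)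
    (hconj : ∀ g a x : G, t a x = 1 ↔ t (g⁻¹ * a * g) (g⁻¹ * x * g) = 1)
    (C : G → Subgroup G) (hC : ∀ x a : G, a ∈ C x ↔ t a x = 1)
    (hCle : ∀ x : G, C x ≤ Subgroup.centralizer {x})
    (hG'Z : ∀ g ∈ commutator G, ∀ x ∈ Subgroup.center G, t g x = 1)
    (p : ℕ) (hp : p.Prime) (hdvd : p ∣ Fintype.card G)
    (hmin : ∀ q : ℕ, q.Prime → q ∣ Fintype.card G → p ≤ q)
    (hindex : ∀ x : G, (¬ ∀ y : G, t x y = 1) → p * Nat.card (C x) ≤ Fintype.card G)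
    (hnonab : ∃ a b : G, a * b ≠ b * a)
    (hZtriv : ∀ g : G, (∀ y : G, t g y = 1) → g = 1) :
    (Nat.card {q : G × G // t q.1 q.2 = 1} : ℝ) / (Fintype.card G : ℝ) ^ 2 ≤
      1 / (p : ℝ) := by
  rw [← Nat.card_eq_fintype_card] at hdvd hmin hindex ⊢
  obtain rfl : p = (Nat.card G).minFac := by
    have hG1 : Nat.card G ≠ 1 := fun h => hp.ne_one (Nat.dvd_one.mp (h ▸ hdvd))
    exact le_antisymm (hmin _ (Nat.minFac_prime hG1) (Nat.minFac_dvd _))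
      (Nat.minFac_le_of_dvd hp.two_le hdvd)
  have hcount : Nat.card {q : G × G // t q.1 q.2 = 1} = ∑ x, Nat.card (C x) :=
    (Nat.card_congr (Equiv.subtypeEquivRight fun q : G × G => (hC q.2 q.1).symm)).trans
      (nat_card_subtype_fst_mem_eq_sum fun x => (C x : Set G))
  have hbound : ∀ x ≠ 1, (Nat.card G).minFac * Nat.card (C x) ≤ Nat.card G :=
    fun x hx => hindex x (mt (hZtriv x) hx)
  have hcard_conj (x y : G) : IsConj x y → Nat.card (C x) = Nat.card (C y) :=
    nat_card_eq_of_isConj fun g a x => by rw [hC, hC]; exact hconj g a x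
  suffices key : (Nat.card G).minFac * ∑ x, Nat.card (C x) ≤ Nat.card G ^ 2 by
    have hn : (0 : ℝ) < Nat.card G := Nat.cast_pos.mpr Nat.card_pos
    have hp0 : (0 : ℝ) < (Nat.card G).minFac := Nat.cast_pos.mpr (Nat.minFac_pos _)
    rw [div_le_div_iff₀ (by positivity) hp0, one_mul, hcount]
    exact_mod_cast (mul_comm _ _).trans_le key
  by_cases hdef : ∃ g ∉ center G, C g ≠ centralizer {g}
  · obtain ⟨g, hg, hgC⟩ := hdef
    exact minFac_mul_sum_card_le_sq_of_ne_centralizer hbound hCle hcard_conj hg hgC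
  · push Not at hdef
    have hZ : center G ⊓ commutator G = ⊥ := by
      refine eq_bot_iff.mpr fun z ⟨hzZ, hzG'⟩ => hZtriv z fun y => ?_
      by_cases hy : y ∈ center G
      · exact hG'Z z hzG' y hy
      · rw [← hC, hdef y hy, mem_centralizer_singleton_iff]
        exact (mem_center_iff.mp hzZ y).symm
    exact minFac_mul_sum_card_le_sq_of_eq_centralizer hbound hdef hZ hnonab

/-- Theorem 3.4: let `G` be a finite nonabelian group with trivial tensor center
`Z⊗(G) = 1`, and let `p` be the smallest prime dividing `|G|`. Then `d⊗(G) ≤ 1/p`.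
The tensor square is modelled by a group `T`, a pairing `t` and the commutator
homomorphism `κ`; tensor centralizers are subgroups of centralizers, conjugation
invariance holds, `|G : C_G^⊗(x)| ≥ p` for `x ∉ Z⊗(G)`, and central elements have
tensor centralizer containing the derived subgroup. -/
theorem tensor_degree_le_one_div_p_of_trivial_tensor_center
    {G T : Type*} [Group G] [Fintype G] [Group T]
    (t : G → G → T) (κ : T →* G)
    (hκ : ∀ a b : G, κ (t a b) = ⁅a, b⁆)
    (hconj : ∀ g a x : G, t a x = 1 ↔ t (g⁻¹ * a * g) (g⁻¹ * x * g) = 1)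
    (C : G → Subgroup G) (hC : ∀ x a : G, a ∈ C x ↔ t a x = 1)
    (hCle : ∀ x : G, C x ≤ Subgroup.centralizer {x})
    (hG'Z : ∀ g ∈ commutator G, ∀ x ∈ Subgroup.center G, t g x = 1)
    (p : ℕ) (hp : p.Prime) (hdvd : p ∣ Fintype.card G)
    (hmin : ∀ q : ℕ, q.Prime → q ∣ Fintype.card G → p ≤ q)
    (hindex : ∀ x : G, (¬ ∀ y : G, t x y = 1) → p * Nat.card (C x) ≤ Fintype.card G)
    (hnonab : ∃ a b : G, a * b ≠ b * a)
    (hZtriv : ∀ g : G, (∀ y : G, t g y = 1) → g = 1) :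
    (Nat.card {q : G × G // t q.1 q.2 = 1} : ℝ) / (Fintype.card G : ℝ) ^ 2 ≤
      1 / (p : ℝ) :=
  tensor_degree_le_one_div_p_of_trivial_tensor_center_general t hconj C hC hCle hG'Z p hp hdvd hmin
    hindex hnonab hZtriv
end

section
/- If G is a finite nonabelian group with Z(G) ∩ G' ≠ 1 and C_G^⊗(x) = C_G(x) for every x ∉ Z(G), then Z^⊗(G) ≠ 1. Equivalently, if Z^⊗(G) = 1 and Z(G) ∩ G' ≠ 1, then some noncentral x has C_G^⊗(x) strictly smaller than C_G(x). -/
/-! An element `g ≠ 1` of `Z(G) ∩ G'` works: for central `y` it lies in `C_G^⊗(y)` because it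
lies in `G'`, and for noncentral `y` because it lies in `Z(G) ⊆ C_G(y) = C_G^⊗(y)`. -/

section Pairing

variable {G T : Type*} [Group G] [Group T] {t : G → G → T}

theorem pairing_eq_one_of_mem_center_of_not_mem_center
    (hcent : ∀ x : G, x ∉ Subgroup.center G →
      {a : G | t a x = 1} = (Subgroup.centralizer {x} : Set G))
    {g y : G} (hg : g ∈ Subgroup.center G) (hy : y ∉ Subgroup.center G) : t g y = 1 := by
  have hgy : g ∈ (Subgroup.centralizer {y} : Set G) :=
    Subgroup.centralizer_le (Set.subset_univ _) (Subgroup.centralizer_univ (G := G) ▸ hg)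
  rwa [← hcent y hy] at hgy

theorem pairing_eq_one_of_mem_center_inf_commutator
    (hG'Z : ∀ g ∈ commutator G, ∀ x ∈ Subgroup.center G, t g x = 1)
    (hcent : ∀ x : G, x ∉ Subgroup.center G →
      {a : G | t a x = 1} = (Subgroup.centralizer {x} : Set G))
    {g : G} (hg : g ∈ Subgroup.center G ⊓ commutator G) (y : G) : t g y = 1 := by
  by_cases hy : y ∈ Subgroup.center G
  · exact hG'Z g hg.2 y hy
  · exact pairing_eq_one_of_mem_center_of_not_mem_center hcent hg.1 hy

end Pairing

theorem tensor_center_nontrivial_of_tensor_centralizers_eq_general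
    {G T : Type*} [Group G] [Group T]
    (t : G → G → T)
    (hG'Z : ∀ g ∈ commutator G, ∀ x ∈ Subgroup.center G, t g x = 1)
    (hZG' : Subgroup.center G ⊓ commutator G ≠ ⊥)
    (hcent : ∀ x : G, x ∉ Subgroup.center G →
      {a : G | t a x = 1} = (Subgroup.centralizer {x} : Set G)) :
    ∃ g : G, g ≠ 1 ∧ ∀ y : G, t g y = 1 := by
  obtain ⟨g, hg, hg1⟩ := (Subgroup.center G ⊓ commutator G).bot_or_exists_ne_one.resolve_left hZG'
  exact ⟨g, hg1, pairing_eq_one_of_mem_center_inf_commutator hG'Z hcent hg⟩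

/-- First claim in the proof of Theorem 3.4: if `G` is a finite nonabelian group with
`Z(G) ∩ G' ≠ 1` and `C_G^⊗(x) = C_G(x)` for every `x ∉ Z(G)`, then `Z⊗(G) ≠ 1`,
i.e. some nontrivial element tensor-commutes with all of `G`. The tensor square is
modelled by a pairing `t : G → G → T`; we use the fact that central elements have
tensor centralizer containing the derived subgroup. -/
theorem tensor_center_nontrivial_of_tensor_centralizers_eq
    {G T : Type*} [Group G] [Finite G] [Group T]
    (t : G → G → T)
    (hnonab : ∃ a b : G, a * b ≠ b * a)
    (hG'Z : ∀ g ∈ commutator G, ∀ x ∈ Subgroup.center G, t g x = 1)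
    (hZG' : Subgroup.center G ⊓ commutator G ≠ ⊥)
    (hcent : ∀ x : G, x ∉ Subgroup.center G →
      {a : G | t a x = 1} = (Subgroup.centralizer {x} : Set G)) :
    ∃ g : G, g ≠ 1 ∧ ∀ y : G, t g y = 1 :=
  tensor_center_nontrivial_of_tensor_centralizers_eq_general t hG'Z hZG' hcent
end

section
/- For any finite group G with smallest prime divisor p of |G|, the commutativity degree satisfies d(G) ≤ 1/p + (1 − 1/p)·|Z(G)|/|G|. -/
open ConjClasses

theorem aux_card_ge {G : Type*} [Group G] [Fintype G]
    (p : ℕ)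
    (hmin : ∀ q : ℕ, q.Prime → q ∣ Fintype.card G → p ≤ q)
    (x : ConjClasses G) (hx : x ∈ noncenter G) : p ≤ Nat.card x.carrier := by
  obtain ⟨g, rfl⟩ := x.exists_rep
  have hdiv : Nat.card (ConjClasses.mk g).carrier ∣ Fintype.card G := by
    rw [← ConjAct.orbit_eq_carrier_conjClasses,
      Nat.card_congr (MulAction.orbitEquivQuotientStabilizer (ConjAct G) g),
      ← Nat.card_eq_fintype_card (α := G)]
    have : Nat.card G = Nat.card (ConjAct G) := Nat.card_congr ConjAct.toConjAct.toEquiv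
    rw [this, ← Subgroup.index_eq_card]
    exact Subgroup.index_dvd_card _
  have h1 : 1 < Nat.card (ConjClasses.mk g).carrier := by
    rw [Nat.card_coe_set_eq]
    exact (Set.one_lt_ncard (Set.toFinite _)).mpr ((mem_noncenter _).mp hx)
  set c := Nat.card (ConjClasses.mk g).carrier
  calc p ≤ c.minFac := hmin _ (Nat.minFac_prime h1.ne') ((c.minFac_dvd).trans hdiv)
    _ ≤ c := Nat.minFac_le (by omega)

theorem aux_key {G : Type*} [Group G] [Fintype G]
    (p : ℕ)
    (hmin : ∀ q : ℕ, q.Prime → q ∣ Fintype.card G → p ≤ q) :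
    p * Nat.card (ConjClasses G) + Nat.card (Subgroup.center G) ≤
      Fintype.card G + p * Nat.card (Subgroup.center G) := by
  classical
  rw [Nat.card_eq_fintype_card, Nat.card_eq_fintype_card]
  set N := (noncenter G).toFinset with hN
  set z := Fintype.card (Subgroup.center G)
  have hclass : z + ∑ x ∈ N, x.carrier.toFinset.card = Fintype.card G :=
    Group.card_center_add_sum_card_noncenter_eq_card G
  have hz : z = (Finset.univ \ N).card := by
    calc z = Fintype.card ((noncenter G)ᶜ : Set _) :=
          Fintype.card_congr ((mk_bijOn G).equiv _)
      _ = (Finset.univ \ N).card := by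
          rw [← Set.toFinset_card, Set.toFinset_compl, Finset.compl_eq_univ_sdiff]
  have hcc : Fintype.card (ConjClasses G) = (Finset.univ \ N).card + N.card := by
    rw [Finset.card_sdiff_add_card]
    rw [Finset.union_eq_left.mpr (Finset.subset_univ N), Finset.card_univ]
  have hsum : p * N.card ≤ ∑ x ∈ N, x.carrier.toFinset.card := by
    rw [mul_comm, ← smul_eq_mul]
    apply Finset.card_nsmul_le_sum
    intro x hx
    have := aux_card_ge p hmin x (by simpa [hN, Set.mem_toFinset] using hx)
    rwa [Nat.card_coe_set_eq, Set.ncard_eq_toFinset_card'] at this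
  calc p * Fintype.card (ConjClasses G) + z
      = p * z + z + p * N.card := by rw [hcc, ← hz]; ring
    _ ≤ p * z + z + ∑ x ∈ N, x.carrier.toFinset.card := by omega
    _ = Fintype.card G + p * z := by omega


/-- For any finite group `G` with `p` the smallest prime divisor of `|G|`, the
commutativity degree satisfies `d(G) ≤ 1/p + (1 − 1/p)·|Z(G)|/|G|`. -/
theorem commutativity_degree_le
    {G : Type*} [Group G] [Fintype G]
    (p : ℕ) (hp : p.Prime) (hdvd : p ∣ Fintype.card G)
    (hmin : ∀ q : ℕ, q.Prime → q ∣ Fintype.card G → p ≤ q) :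
    (Nat.card {q : G × G // Commute q.1 q.2} : ℝ) / (Fintype.card G : ℝ) ^ 2 ≤
      1 / (p : ℝ) +
        (1 - 1 / (p : ℝ)) * (Nat.card (Subgroup.center G) : ℝ) / (Fintype.card G : ℝ) := by
  have key := aux_key p hmin
  rw [card_comm_eq_card_conjClasses_mul_card, Nat.card_eq_fintype_card (α := G)]
  set n := Fintype.card G with hn'
  set k := Nat.card (ConjClasses G)
  set z := Nat.card (Subgroup.center G)
  have hn : (0:ℝ) < n := by exact_mod_cast Fintype.card_pos
  have hp0 : (0:ℝ) < p := by exact_mod_cast hp.pos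
  have hkey : (p:ℝ) * k + z ≤ n + p * z := by exact_mod_cast key
  rw [Nat.cast_mul]
  have hL : (k:ℝ) * n / n ^ 2 = (p * k) / (p * n) := by
    field_simp
  have hR : 1 / (p:ℝ) + (1 - 1 / p) * z / n = (n + p * z - z) / (p * n) := by
    field_simp; ring
  rw [hL, hR, div_le_div_iff₀ (by positivity) (by positivity)]
  have h2 : (p:ℝ) * k ≤ n + p * z - z := by linarith
  exact mul_le_mul_of_nonneg_right h2 (by positivity)
end

section
/- If G = C_p^(n) is the elementary abelian p-group of rank n ≥ 1, then d^⊗(G) = (2pⁿ − 1)/p^{2n}. -/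
open scoped TensorProduct

theorem Pi.tmul_eq_zero_iff {S R ι : Type*} [CommSemiring S] [CommSemiring R] [NoZeroDivisors R]
    [Algebra S R] {x y : ι → R} :
    (x ⊗ₜ[S] y : (ι → R) ⊗[S] (ι → R)) = 0 ↔ x = 0 ∨ y = 0 := by
  refine ⟨fun h => ?_, by rintro (rfl | rfl) <;> simp⟩
  by_contra! hxy
  obtain ⟨i, hi⟩ := Function.ne_iff.mp hxy.1
  obtain ⟨j, hj⟩ := Function.ne_iff.mp hxy.2
  -- `(a, b) ↦ a i * b j` is bilinear and does not vanish on `(x, y)`.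
  let B : (ι → R) →ₗ[S] (ι → R) →ₗ[S] R :=
    (LinearMap.mul S R).compl₁₂ ((LinearMap.proj (R := R) i).restrictScalars S)
      ((LinearMap.proj (R := R) j).restrictScalars S)
  have hB : TensorProduct.lift B (x ⊗ₜ y) = x i * y j := rfl
  rw [h, map_zero] at hB
  exact mul_ne_zero hi hj hB.symm

theorem Nat.card_prod_fst_eq_zero_or_snd_eq_zero (α : Type*) [Finite α] [Zero α] :
    Nat.card {q : α × α // q.1 = 0 ∨ q.2 = 0} = 2 * Nat.card α - 1 := by
  classical
  have := Fintype.ofFinite α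
  have hsplit : (Finset.univ.filter fun q : α × α => q.1 = 0 ∨ q.2 = 0) =
      ({0} ×ˢ Finset.univ) ∪ (Finset.univ ×ˢ {0}) := by
    ext q; simp [Prod.ext_iff, eq_comm]
  have hinter : ({0} ×ˢ Finset.univ ∩ Finset.univ ×ˢ {0} : Finset (α × α)) = {(0, 0)} := by
    ext q; simp [Prod.ext_iff, eq_comm, and_comm]
  have hunion := Finset.card_union_add_card_inter
    ({0} ×ˢ Finset.univ : Finset (α × α)) (Finset.univ ×ˢ {0})
  rw [hinter, Finset.card_product, Finset.card_product] at hunion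
  rw [Nat.card_eq_fintype_card, Fintype.card_subtype, hsplit, Nat.card_eq_fintype_card]
  simp only [Finset.card_singleton, Finset.card_univ] at hunion
  omega

theorem tensor_degree_elementary_abelian_general
    (p n : ℕ) (hp : p.Prime) :
    (Nat.card {q : (Fin n → ZMod p) × (Fin n → ZMod p) //
        (q.1 ⊗ₜ[ℤ] q.2 : (Fin n → ZMod p) ⊗[ℤ] (Fin n → ZMod p)) = 0} : ℝ) /
      (Nat.card (Fin n → ZMod p) : ℝ) ^ 2 =
      (2 * (p : ℝ) ^ n - 1) / (p : ℝ) ^ (2 * n) := by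
  have : Fact p.Prime := ⟨hp⟩
  have hcard : Nat.card (Fin n → ZMod p) = p ^ n := by simp
  have hzero : Nat.card {q : (Fin n → ZMod p) × (Fin n → ZMod p) //
      (q.1 ⊗ₜ[ℤ] q.2 : (Fin n → ZMod p) ⊗[ℤ] (Fin n → ZMod p)) = 0} = 2 * p ^ n - 1 := by
    rw [Nat.card_congr (Equiv.subtypeEquivRight fun _ => Pi.tmul_eq_zero_iff),
      Nat.card_prod_fst_eq_zero_or_snd_eq_zero, hcard]
  have hpos : 1 ≤ 2 * p ^ n := by have := Nat.one_le_pow n p hp.pos; omega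
  rw [hzero, hcard, Nat.cast_sub hpos]
  push_cast
  ring

/-- If `G = C_p^(n)` is the elementary abelian `p`-group of rank `n ≥ 1`, realized as
`(ℤ/pℤ)ⁿ`, then its tensor degree (with the tensor square being the usual tensor
product of abelian groups) is `(2pⁿ − 1)/p^{2n}`. -/
theorem tensor_degree_elementary_abelian
    (p n : ℕ) (hp : p.Prime) (hn : 1 ≤ n) :
    (Nat.card {q : (Fin n → ZMod p) × (Fin n → ZMod p) //
        (q.1 ⊗ₜ[ℤ] q.2 : (Fin n → ZMod p) ⊗[ℤ] (Fin n → ZMod p)) = 0} : ℝ) /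
      (Nat.card (Fin n → ZMod p) : ℝ) ^ 2 =
      (2 * (p : ℝ) ^ n - 1) / (p : ℝ) ^ (2 * n) :=
  tensor_degree_elementary_abelian_general p n hp
end

section
/- If a finite group G is left unidegree, i.e. d^⊗(G) = d(G), then Z(G) = Z^⊗(G). -/
open scoped commutatorElement

/-!
Since `κ (a ⊗ b) = ⁅a, b⁆`, every pair with trivial tensor commutes, so the pairs with trivial
tensor form a subset of the commuting pairs. Equality of the two degrees says that these finite
sets have the same size, hence they coincide, and `Z(G)` and `Z⊗(G)` are both the set of elements
forming such a pair with every `y`.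
-/

theorem Finite.forall_iff_of_imp_of_card_le {α : Type*} [Finite α] {P Q : α → Prop}
    (hPQ : ∀ a, P a → Q a) (hcard : Nat.card {a // Q a} ≤ Nat.card {a // P a}) :
    ∀ a, P a ↔ Q a := by
  have hset : {a | P a} = {a | Q a} :=
    Set.eq_of_subset_of_ncard_le hPQ (by rwa [← Nat.card_coe_set_eq, ← Nat.card_coe_set_eq])
  exact fun a => Set.ext_iff.mp hset a

theorem commute_of_pairing_eq_one {G T : Type*} [Group G] [Group T]
    {t : G → G → T} (κ : T →* G) (hκ : ∀ a b : G, κ (t a b) = ⁅a, b⁆) {a b : G}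
    (hab : t a b = 1) : Commute a b := by
  rw [← commutatorElement_eq_one_iff_commute, ← hκ, hab, map_one]

theorem pairing_eq_one_iff_commute_of_card_eq {G T : Type*} [Group G] [Finite G] [Group T]
    {t : G → G → T} (κ : T →* G) (hκ : ∀ a b : G, κ (t a b) = ⁅a, b⁆)
    (hcard : Nat.card {q : G × G // t q.1 q.2 = 1} = Nat.card {q : G × G // Commute q.1 q.2})
    (a b : G) : t a b = 1 ↔ Commute a b :=
  Finite.forall_iff_of_imp_of_card_le (fun _ => commute_of_pairing_eq_one κ hκ) hcard.ge (a, b)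

theorem center_eq_tensor_center_of_left_unidegree_general
    {G T : Type*} [Group G] [Fintype G] [Group T]
    (t : G → G → T) (κ : T →* G)
    (hκ : ∀ a b : G, κ (t a b) = ⁅a, b⁆)
    (hunideg : (Nat.card {q : G × G // t q.1 q.2 = 1} : ℝ) / (Fintype.card G : ℝ) ^ 2 =
      (Nat.card {q : G × G // Commute q.1 q.2} : ℝ) / (Fintype.card G : ℝ) ^ 2) :
    (Subgroup.center G : Set G) = {g : G | ∀ y : G, t g y = 1} := by
  have hcard_sq_ne_zero : (Fintype.card G : ℝ) ^ 2 ≠ 0 := by positivity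
  have hcard : Nat.card {q : G × G // t q.1 q.2 = 1} = Nat.card {q : G × G // Commute q.1 q.2} :=
    by exact_mod_cast (div_left_inj' hcard_sq_ne_zero).mp hunideg
  ext g
  simp only [SetLike.mem_coe, Subgroup.mem_center_iff, Set.mem_ofPred_eq,
    pairing_eq_one_iff_commute_of_card_eq κ hκ hcard]
  exact forall_congr' fun _ => ⟨Commute.symm, Commute.symm⟩

/-- Corollary 2.8 (first part): if a finite group `G` is left unidegree, i.e.
`d⊗(G) = d(G)`, then `Z(G) = Z⊗(G)`. The tensor square is modelled by a group `T`,
a pairing `t` and the commutator homomorphism `κ`, with conjugation invariance and the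
index bound `|G : C_G^⊗(x)| ≥ p` for `x ∉ Z⊗(G)`, where `p` is the smallest prime
divisor of `|G|`. -/
theorem center_eq_tensor_center_of_left_unidegree
    {G T : Type*} [Group G] [Fintype G] [Group T]
    (t : G → G → T) (κ : T →* G)
    (hκ : ∀ a b : G, κ (t a b) = ⁅a, b⁆)
    (hconj : ∀ g a x : G, t a x = 1 ↔ t (g⁻¹ * a * g) (g⁻¹ * x * g) = 1)
    (p : ℕ) (hp : p.Prime) (hdvd : p ∣ Fintype.card G)
    (hmin : ∀ q : ℕ, q.Prime → q ∣ Fintype.card G → p ≤ q)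
    (hindex : ∀ x : G, (¬ ∀ y : G, t x y = 1) →
      p * Nat.card {a : G // t a x = 1} ≤ Fintype.card G)
    (hunideg : (Nat.card {q : G × G // t q.1 q.2 = 1} : ℝ) / (Fintype.card G : ℝ) ^ 2 =
      (Nat.card {q : G × G // Commute q.1 q.2} : ℝ) / (Fintype.card G : ℝ) ^ 2) :
    (Subgroup.center G : Set G) = {g : G | ∀ y : G, t g y = 1} :=
  center_eq_tensor_center_of_left_unidegree_general t κ hκ hunideg
end
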